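/- Let δ ∈ (0,1] and ζ < 0, and let ν be the density ν(x) = κ/a(x) · exp(∫₀^x 2b(y)/a(y) dy) on ℝ, where b(x) = μ[(x+ζ)⁻ + ζ], a(x) = μ[1 + 1(x > −1/δ)(1 − δ((x+ζ)⁻ + ζ))], and κ > 0 normalizes ν to integrate to 1. Then ν(x) ≤ 4 for all x ∈ ℝ. -/

import Mathlib

open Real MeasureTheory Set

/-!
The drift `b` points towards the origin and `a ≥ μ`, so the exponent `∫₀ˣ 2b/a` is nonpositive
and `ν ≤ κ / μ` everywhere. On `[-1, 0]` the coefficients are explicit, `b = -μx` and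
`a = μ(2 + δx) ≤ 2μ`, so the exponent is at least `-x²` and `ν(x) ≥ κ(1 - x²)/(2μ)`.
Integrating this over `[-1, 0]` against the unit mass of `ν` gives `κ / μ ≤ 3`.
-/

lemma integral_from_zero_nonpos_of_sign {f : ℝ → ℝ} (hneg : ∀ y ≤ 0, 0 ≤ f y)
    (hpos : ∀ y, 0 ≤ y → f y ≤ 0) (x : ℝ) : ∫ y in (0 : ℝ)..x, f y ≤ 0 := by
  rcases le_total 0 x with hx | hx
  · have : 0 ≤ ∫ y in (0 : ℝ)..x, -f y :=
      intervalIntegral.integral_nonneg hx fun u hu ↦ neg_nonneg.mpr (hpos u hu.1)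
    rwa [intervalIntegral.integral_neg, neg_nonneg] at this
  · rw [intervalIntegral.integral_symm, neg_nonpos]
    exact intervalIntegral.integral_nonneg hx fun u hu ↦ hneg u hu.2

lemma two_thirds_mul_le_integral {ν : ℝ → ℝ} {c : ℝ} (hν : ∀ x, 0 ≤ ν x) (hint : Integrable ν)
    (hlow : ∀ x ∈ Icc (-1 : ℝ) 0, c * (1 - x ^ 2) ≤ ν x) : 2 / 3 * c ≤ ∫ x, ν x := by
  have hbump : ∫ x in Icc (-1 : ℝ) 0, c * (1 - x ^ 2) = 2 / 3 * c := by
    rw [integral_Icc_eq_integral_Ioc, ← intervalIntegral.integral_of_le (by norm_num),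
      intervalIntegral.integral_const_mul, intervalIntegral.integral_sub intervalIntegrable_const
        (intervalIntegral.intervalIntegrable_pow 2), integral_pow]
    norm_num
    ring
  calc 2 / 3 * c = ∫ x in Icc (-1 : ℝ) 0, c * (1 - x ^ 2) := hbump.symm
    _ ≤ ∫ x in Icc (-1 : ℝ) 0, ν x :=
      setIntegral_mono_on (Continuous.integrableOn_Icc (by fun_prop)) hint.integrableOn
        measurableSet_Icc hlow
    _ ≤ ∫ x, ν x := setIntegral_le_integral hint (.of_forall hν)

def driftY (μ ζ x : ℝ) : ℝ := μ * (max (-(x + ζ)) 0 + ζ)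

noncomputable def diffusionY (δ ζ μ x : ℝ) : ℝ :=
  μ * (1 + (if x > -1 / δ then (1 : ℝ) else 0) * (1 - δ * (max (-(x + ζ)) 0 + ζ)))

section Coefficients

variable {δ ζ μ x : ℝ}

lemma driftY_of_le_neg (hx : x ≤ -ζ) : driftY μ ζ x = -μ * x := by
  rw [driftY, max_eq_left (by linarith)]; ring

lemma driftY_nonpos (hζ : ζ ≤ 0) (hμ : 0 ≤ μ) (hx : 0 ≤ x) : driftY μ ζ x ≤ 0 := by
  rw [driftY]
  rcases le_total (-(x + ζ)) 0 with h | h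
  · rw [max_eq_right h]; nlinarith
  · rw [max_eq_left h]; nlinarith

lemma driftY_nonneg (hζ : ζ ≤ 0) (hμ : 0 ≤ μ) (hx : x ≤ 0) : 0 ≤ driftY μ ζ x := by
  rw [driftY_of_le_neg (by linarith)]; nlinarith

lemma le_diffusionY (hδ : 0 < δ) (hζ : ζ ≤ 0) (hμ : 0 ≤ μ) : μ ≤ diffusionY δ ζ μ x := by
  rw [diffusionY]
  split_ifs with h
  · have hδx : -1 < δ * x := by
      have h : -1 / δ < x := h
      rwa [div_lt_iff₀ hδ, mul_comm] at h
    have : 0 ≤ 1 - δ * (max (-(x + ζ)) 0 + ζ) := by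
      rcases le_total (-(x + ζ)) 0 with h' | h'
      · rw [max_eq_right h']; nlinarith
      · rw [max_eq_left h']; nlinarith
    nlinarith
  · simp

lemma diffusionY_pos (hδ : 0 < δ) (hζ : ζ ≤ 0) (hμ : 0 < μ) : 0 < diffusionY δ ζ μ x :=
  hμ.trans_le (le_diffusionY hδ hζ hμ.le)

-- At the endpoint `δ = 1, x = -1` the indicator vanishes, but both sides equal `μ`.
lemma diffusionY_of_mem_Icc (hδ0 : 0 < δ) (hδ1 : δ ≤ 1) (hζ : ζ ≤ 0) (hx : x ∈ Icc (-1) 0) :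
    diffusionY δ ζ μ x = μ * (2 + δ * x) := by
  rw [diffusionY, max_eq_left (by linarith [hx.2])]
  split_ifs with h
  · ring
  · have : δ * x = -1 := by
      have : x ≤ -1 / δ := not_lt.mp h
      rw [le_div_iff₀ hδ0] at this
      nlinarith [hx.1]
    rw [this, zero_mul, add_zero]; ring

end Coefficients

section Density

variable {δ ζ μ κ : ℝ}

lemma integral_drift_div_diffusion_nonpos (hδ : 0 < δ) (hζ : ζ ≤ 0) (hμ : 0 < μ) (x : ℝ) :
    ∫ y in (0 : ℝ)..x, 2 * driftY μ ζ y / diffusionY δ ζ μ y ≤ 0 :=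
  integral_from_zero_nonpos_of_sign
    (fun y hy ↦ div_nonneg (by linarith [driftY_nonneg hζ hμ.le hy])
      (diffusionY_pos hδ hζ hμ).le)
    (fun y hy ↦ div_nonpos_of_nonpos_of_nonneg (by linarith [driftY_nonpos hζ hμ.le hy])
      (diffusionY_pos hδ hζ hμ).le) x

lemma neg_sq_le_integral_drift_div_diffusion (hδ0 : 0 < δ) (hδ1 : δ ≤ 1) (hζ : ζ ≤ 0)
    (hμ : 0 < μ) {x : ℝ} (hx : x ∈ Icc (-1) 0) :
    -x ^ 2 ≤ ∫ y in (0 : ℝ)..x, 2 * driftY μ ζ y / diffusionY δ ζ μ y := by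
  have hden : ∀ y ∈ Icc x 0, 1 ≤ 2 + δ * y := fun y hy ↦ by nlinarith [hx.1, hy.1, hy.2]
  have heq : EqOn (fun y ↦ 2 * driftY μ ζ y / diffusionY δ ζ μ y) (fun y ↦ -2 * y / (2 + δ * y))
      (uIcc x 0) := by
    intro y hy
    rw [uIcc_of_le hx.2] at hy
    dsimp only
    rw [driftY_of_le_neg (by linarith [hy.2]),
      diffusionY_of_mem_Icc hδ0 hδ1 hζ ⟨hx.1.trans hy.1, hy.2⟩]
    field_simp
  have hint : IntervalIntegrable (fun y ↦ -2 * y / (2 + δ * y)) volume x 0 := by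
    refine ContinuousOn.intervalIntegrable (ContinuousOn.div (by fun_prop) (by fun_prop) ?_)
    intro y hy
    rw [uIcc_of_le hx.2] at hy
    linarith [hden y hy]
  have hmono : ∫ y in x..0, -2 * y / (2 + δ * y) ≤ ∫ y in x..0, -2 * y :=
    intervalIntegral.integral_mono_on hx.2 hint
      ((continuous_const_mul (-2)).intervalIntegrable _ _)
      fun y hy ↦ div_le_self (by linarith [hy.2]) (hden y hy)
  have hsq : ∫ y in x..0, -2 * y = x ^ 2 := by
    rw [intervalIntegral.integral_const_mul, integral_id]; ring
  rw [intervalIntegral.integral_symm, intervalIntegral.integral_congr heq]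
  linarith

noncomputable def densityY (δ ζ μ κ x : ℝ) : ℝ :=
  κ / diffusionY δ ζ μ x * exp (∫ y in (0 : ℝ)..x, 2 * driftY μ ζ y / diffusionY δ ζ μ y)

lemma densityY_nonneg (hδ : 0 < δ) (hζ : ζ ≤ 0) (hμ : 0 < μ) (hκ : 0 ≤ κ) (x : ℝ) :
    0 ≤ densityY δ ζ μ κ x :=
  mul_nonneg (div_nonneg hκ (diffusionY_pos hδ hζ hμ).le) (exp_pos _).le

lemma densityY_le (hδ : 0 < δ) (hζ : ζ ≤ 0) (hμ : 0 < μ) (hκ : 0 ≤ κ) (x : ℝ) :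
    densityY δ ζ μ κ x ≤ κ / μ := by
  calc densityY δ ζ μ κ x ≤ κ / diffusionY δ ζ μ x * 1 :=
        mul_le_mul_of_nonneg_left
          (exp_le_one_iff.mpr (integral_drift_div_diffusion_nonpos hδ hζ hμ x))
          (div_nonneg hκ (diffusionY_pos hδ hζ hμ).le)
    _ ≤ κ / μ := by
      rw [mul_one]; exact div_le_div_of_nonneg_left hκ hμ (le_diffusionY hδ hζ hμ.le)

lemma half_mul_one_sub_sq_le_densityY (hδ0 : 0 < δ) (hδ1 : δ ≤ 1) (hζ : ζ ≤ 0) (hμ : 0 < μ)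
    (hκ : 0 ≤ κ) {x : ℝ} (hx : x ∈ Icc (-1) 0) :
    κ / (2 * μ) * (1 - x ^ 2) ≤ densityY δ ζ μ κ x := by
  have hdiff : diffusionY δ ζ μ x ≤ 2 * μ := by
    rw [diffusionY_of_mem_Icc hδ0 hδ1 hζ hx]
    nlinarith [mul_nonneg (mul_nonneg hμ.le hδ0.le) (neg_nonneg.mpr hx.2)]
  have hexp := neg_sq_le_integral_drift_div_diffusion hδ0 hδ1 hζ hμ hx
  refine mul_le_mul (div_le_div_of_nonneg_left hκ (diffusionY_pos hδ0 hζ hμ) hdiff) ?_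
    (by nlinarith [hx.1, hx.2]) (div_nonneg hκ (diffusionY_pos hδ0 hζ hμ).le)
  linarith [add_one_le_exp (∫ y in (0 : ℝ)..x, 2 * driftY μ ζ y / diffusionY δ ζ μ y)]

end Density

theorem density_Y_bound (δ ζ μ κ : ℝ) (hδ0 : 0 < δ) (hδ1 : δ ≤ 1) (hζ : ζ < 0) (hμ : 0 < μ)
    (hκ : 0 < κ)
    (b a ν : ℝ → ℝ)
    (hb : ∀ x, b x = μ * (max (-(x + ζ)) 0 + ζ))
    (ha : ∀ x, a x =
      μ * (1 + (if x > -1 / δ then (1 : ℝ) else 0) * (1 - δ * (max (-(x + ζ)) 0 + ζ))))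
    (hν : ∀ x, ν x = κ / a x * Real.exp (∫ y in (0 : ℝ)..x, 2 * b y / a y))
    (hnorm : ∫ x, ν x = 1) :
    ∀ x : ℝ, ν x ≤ 4 := by
  obtain rfl : b = driftY μ ζ := funext hb
  obtain rfl : a = diffusionY δ ζ μ := funext ha
  obtain rfl : ν = densityY δ ζ μ κ := funext hν
  have hmass := two_thirds_mul_le_integral (densityY_nonneg hδ0 hζ.le hμ hκ.le)
    (integrable_of_integral_eq_one hnorm)
    fun x hx ↦ half_mul_one_sub_sq_le_densityY hδ0 hδ1 hζ.le hμ hκ.le hx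
  rw [hnorm] at hmass
  have hκμ : κ / μ ≤ 3 := by
    have : 2 / 3 * (κ / (2 * μ)) = κ / μ / 3 := by ring
    linarith
  exact fun x ↦ (densityY_le hδ0 hζ.le hμ hκ.le x).trans (by linarith)
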